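/- arXiv:1706.01668 — 6 statements merged into one kernel-verified Lean document; each statement's English description precedes it below -/
import Mathlib

section
/- If a word w = a_1...a_n has period p and period q, where a word has period p when a_i = a_{i+p} for all 1 ≤ i ≤ |w| - p, and |w| ≥ p + q - gcd(p,q), then w has period gcd(p,q). -/
/-- A word `w` has period `p` if letters at distance `p` coincide:
`a_i = a_{i+p}` for all `1 ≤ i ≤ |w| - p` (here 0-indexed). -/
def HasPeriod {α : Type*} (w : List α) (p : ℕ) : Prop :=
  ∀ i, i + p < w.length → w[i]? = w[i + p]?

/-!
Euclid's algorithm on the periods. For `0 < q < p`, the prefix of `w` of length `|w| - q` has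
periods `p - q` and `q`, and is long enough for the same statement with `gcd (p - q) q = gcd p q`.
Its period `gcd p q` then spreads to all of `w`: period `q` reduces every position modulo `q`,
into a prefix of length at least `q`, where period `gcd p q` identifies positions that are
congruent modulo `gcd p q`.
-/

namespace HasPeriod

variable {α : Type*} {w : List α} {p q : ℕ}

theorem getElem?_add_mul (hw : HasPeriod w p) {i : ℕ} :
    ∀ k, i + p * k < w.length → w[i]? = w[i + p * k]?
  | 0, _ => rfl
  | k + 1, hk => by
    rw [hw.getElem?_add_mul k (by nlinarith), hw (i + p * k) (by nlinarith)]
    ring_nf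

theorem getElem?_mod (hw : HasPeriod w p) {i : ℕ} (hi : i < w.length) :
    w[i]? = w[i % p]? := by
  conv_lhs => rw [← Nat.mod_add_div i p]
  exact (hw.getElem?_add_mul _ (by rwa [Nat.mod_add_div])).symm

theorem take (hw : HasPeriod w p) (m : ℕ) : HasPeriod (w.take m) p := by
  intro i hi
  simp only [List.length_take] at hi
  rw [List.getElem?_take_of_lt (by omega), List.getElem?_take_of_lt (by omega)]
  exact hw i (by omega)

theorem take_length_sub (hwp : HasPeriod w p) (hwq : HasPeriod w q) (hqp : q ≤ p) :
    HasPeriod (w.take (w.length - q)) (p - q) := by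
  intro i hi
  simp only [List.length_take] at hi
  rw [List.getElem?_take_of_lt (by omega), List.getElem?_take_of_lt (by omega),
    hwp i (by omega), hwq (i + (p - q)) (by omega)]
  congr 1
  omega

theorem of_take {g m : ℕ} (hwq : HasPeriod w q) (hq : 0 < q) (hqm : q ≤ m) (hgq : g ∣ q)
    (hu : HasPeriod (w.take m) g) : HasPeriod w g := by
  have reduce : ∀ j < w.length, w[j]? = (w.take m)[j % g]? := fun j hj => by
    have hjq : j % q < q := Nat.mod_lt j hq
    have hjw : j % q < w.length := lt_of_le_of_lt (Nat.mod_le j q) hj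
    rw [hwq.getElem?_mod hj, ← List.getElem?_take_of_lt (hjq.trans_le hqm),
      hu.getElem?_mod (by simp only [List.length_take]; omega), Nat.mod_mod_of_dvd j hgq]
  intro i hi
  rw [reduce i (by omega), reduce (i + g) hi, Nat.add_mod_right]

theorem gcd_of_le_length (hwp : HasPeriod w p) (hwq : HasPeriod w q)
    (hlen : p + q - p.gcd q ≤ w.length) : HasPeriod w (p.gcd q) := by
  induction h : p + q using Nat.strong_induction_on generalizing w p q with
  | _ n ih =>
  wlog hqp : q ≤ p generalizing p q
  · rw [Nat.gcd_comm]
    exact this hwq hwp (by rw [Nat.gcd_comm]; omega) (by omega) (by omega)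
  rcases Nat.eq_zero_or_pos q with rfl | hq
  · simpa using hwp
  rcases hqp.eq_or_lt with rfl | hqp
  · simpa using hwp
  have hg : p.gcd q ≤ p - q :=
    Nat.le_of_dvd (by omega) (Nat.dvd_sub (Nat.gcd_dvd_left p q) (Nat.gcd_dvd_right p q))
  have hprefix : HasPeriod (w.take (w.length - q)) (p.gcd q) := by
    rw [← Nat.gcd_sub_self_left hqp.le]
    refine ih p (by omega) (hwp.take_length_sub hwq hqp.le) (hwq.take _) ?_ (by omega)
    rw [List.length_take, Nat.gcd_sub_self_left hqp.le]
    omega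
  exact hwq.of_take hq (by omega) (Nat.gcd_dvd_right p q) hprefix

end HasPeriod

theorem fine_wilf_general {α : Type*} (w : List α) (p q : ℕ)
    (hwp : HasPeriod w p) (hwq : HasPeriod w q)
    (hlen : p + q - Nat.gcd p q ≤ w.length) :
    HasPeriod w (Nat.gcd p q) :=
  hwp.gcd_of_le_length hwq hlen

/-- Fine and Wilf's theorem: if `w` has periods `p` and `q` and
`|w| ≥ p + q - gcd(p,q)`, then `w` has period `gcd(p,q)`. -/
theorem fine_wilf {α : Type*} (w : List α) (p q : ℕ) (hp : 1 ≤ p) (hq : 1 ≤ q)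
    (hwp : HasPeriod w p) (hwq : HasPeriod w q)
    (hlen : p + q - Nat.gcd p q ≤ w.length) :
    HasPeriod w (Nat.gcd p q) :=
  fine_wilf_general w p q hwp hwq hlen
end

section
/- Let v_0, v_1, ..., v_{k+1} be words and p ≥ 1. If for some n > p the word v_0 · v_1^n · v_2 · ... · v_{k-1} · v_k^n · v_{k+1} has period p, then for all natural numbers n_1, ..., n_k the word v_0 · v_1^{n_1} · v_2 · ... · v_{k-1} · v_k^{n_k} · v_{k+1} has period p. -/
/-- `npow n v` is the `n`-fold repetition `v^n`. -/
def npow {α : Type*} (n : ℕ) (v : List α) : List α :=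
  (List.replicate n v).flatten

/-- `iterWord base rep k e` is the word
`base 0 · (rep 0)^{e 0} · base 1 · (rep 1)^{e 1} · ... · (rep (k-1))^{e (k-1)} · base k`,
i.e. `v_0 · v_1^{e_1} · v_2 · ... · v_{k-1} · v_k^{e_k} · v_{k+1}`. -/
def iterWord {α : Type*} (base rep : ℕ → List α) (k : ℕ) (e : ℕ → ℕ) : List α :=
  (List.range k).foldr (fun j acc => base j ++ npow (e j) (rep j) ++ acc) (base k)

/-!
If `p < m` and `v ≠ []`, then `v^(m-1)` has length at least `p`, so every two positions at
distance `p` in `x v^(m+1) y` lie together in `x v^m` or in `v^m y`, both factors of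
`x v^m y`: the period survives raising the exponent. Lowering it is done by deleting a factor
`v^(p c)`, whose length is a multiple of `p`, which preserves the period. Iterating this over
the blocks one at a time proves the theorem.
-/

section Period

variable {α : Type*} {p : ℕ}

theorem hasPeriod_iff_list_hasPeriod {w : List α} : HasPeriod w p ↔ w.HasPeriod p := by
  rw [List.hasPeriod_iff_getElem?]
  exact forall_congr' fun i => ⟨fun h hi => h (by omega), fun h hi => h (by omega)⟩

theorem HasPeriod.infix {u w : List α} (hw : HasPeriod w p) (huw : u <:+: w) :
    HasPeriod u p :=
  hasPeriod_iff_list_hasPeriod.2 ((hasPeriod_iff_list_hasPeriod.1 hw).infix huw)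

theorem HasPeriod.getElem?_eq_of_modEq {w : List α} (hw : HasPeriod w p) {i j : ℕ}
    (hi : i < w.length) (hj : j < w.length) (hij : i ≡ j [MOD p]) : w[i]? = w[j]? := by
  have hw' := hasPeriod_iff_list_hasPeriod.1 hw
  rw [← hw'.getElem?_mod p i w hi, ← hw'.getElem?_mod p j w hj, hij]

theorem HasPeriod.append_of_overlap {x z y : List α} (hxz : HasPeriod (x ++ z) p)
    (hzy : HasPeriod (z ++ y) p) (hz : p ≤ z.length) : HasPeriod (x ++ z ++ y) p := by
  intro i hi
  simp only [List.length_append] at hi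
  by_cases hprefix : i + p < x.length + z.length
  · rw [List.getElem?_append_left (l₁ := x ++ z) (by simp; omega),
      List.getElem?_append_left (l₁ := x ++ z) (by simpa using hprefix)]
    exact hxz i (by simpa using hprefix)
  · rw [List.append_assoc, List.getElem?_append_right (l₁ := x) (by omega),
      List.getElem?_append_right (l₁ := x) (by omega), show i + p - x.length = i - x.length + p by omega]
    exact hzy (i - x.length) (by simp; omega)

theorem HasPeriod.of_append_append_of_dvd {x z y : List α} (h : HasPeriod (x ++ z ++ y) p)
    (hz : p ∣ z.length) : HasPeriod (x ++ y) p := by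
  intro i hi
  simp only [List.length_append] at hi
  have h_left : ∀ j, j < x.length → (x ++ y)[j]? = (x ++ z ++ y)[j]? := by
    intro j hj
    rw [List.getElem?_append_left hj, List.append_assoc, List.getElem?_append_left hj]
  have h_right : ∀ j, x.length ≤ j → (x ++ y)[j]? = (x ++ z ++ y)[j + z.length]? := by
    intro j hj
    rw [List.getElem?_append_right hj, List.getElem?_append_right (by simp; omega)]
    simp only [List.length_append]
    congr 1
    omega
  rcases lt_or_ge (i + p) x.length with hx | hx
  · rw [h_left i (by omega), h_left (i + p) hx]
    exact h i (by simp; omega)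
  rw [h_right (i + p) hx]
  rcases lt_or_ge i x.length with hi' | hi'
  · rw [h_left i hi']
    refine h.getElem?_eq_of_modEq (by simp; omega) (by simp; omega) ?_
    obtain ⟨c, hc⟩ := hz
    simp only [Nat.ModEq, hc, Nat.add_mul_mod_self_left, Nat.add_mod_right]
  · rw [h_right i hi', Nat.add_right_comm]
    exact h _ (by simp; omega)

end Period

section Power

variable {α : Type*}

theorem npow_add_eq_append (m n : ℕ) (v : List α) : npow (m + n) v = npow m v ++ npow n v := by
  simp only [npow, List.replicate_add, List.flatten_append]

theorem npow_succ (m : ℕ) (v : List α) : npow (m + 1) v = v ++ npow m v := by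
  simp [npow, List.replicate_succ]

theorem npow_succ' (m : ℕ) (v : List α) : npow (m + 1) v = npow m v ++ v := by
  simp [npow, List.replicate_succ']

@[simp]
theorem npow_nil (m : ℕ) : npow m ([] : List α) = [] := List.flatten_replicate_nil

@[simp]
theorem length_npow (m : ℕ) (v : List α) : (npow m v).length = m * v.length := by
  simp [npow]

variable {p : ℕ} {x v y : List α}

theorem HasPeriod.append_npow_succ_append {m : ℕ} (hm : p < m)
    (h : HasPeriod (x ++ npow m v ++ y) p) : HasPeriod (x ++ npow (m + 1) v ++ y) p := by
  by_cases hv : v = []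
  · subst hv
    simpa using h
  obtain ⟨m, rfl⟩ : ∃ k, m = k + 1 := ⟨m - 1, by omega⟩
  have hsplit : x ++ npow (m + 2) v ++ y = (x ++ v) ++ npow m v ++ (v ++ y) := by
    rw [npow_succ' (m + 1), npow_succ]
    simp only [List.append_assoc]
  rw [hsplit]
  refine HasPeriod.append_of_overlap ?_ ?_ ?_
  · exact h.infix ⟨[], y, by simp [npow_succ]⟩
  · exact h.infix ⟨x, [], by simp [npow_succ']⟩
  · have : 0 < v.length := List.length_pos_iff.2 hv
    simp only [length_npow]
    nlinarith

theorem HasPeriod.append_npow_append (hp : 0 < p) {n : ℕ} (hn : p < n)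
    (h : HasPeriod (x ++ npow n v ++ y) p) (m : ℕ) : HasPeriod (x ++ npow m v ++ y) p := by
  have h_ge : ∀ M, n ≤ M → HasPeriod (x ++ npow M v ++ y) p := by
    intro M hM
    induction M, hM using Nat.le_induction with
    | base => exact h
    | succ M hM ih => exact ih.append_npow_succ_append (by omega)
  have h_big := h_ge (m + p * n) (by nlinarith)
  rw [npow_add_eq_append, ← List.append_assoc] at h_big
  exact h_big.of_append_append_of_dvd (by simp [Nat.mul_assoc])

end Power

theorem iterWord_succ {α : Type*} (base rep : ℕ → List α) (k : ℕ) (e : ℕ → ℕ) :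
    iterWord base rep (k + 1) e =
      base 0 ++ npow (e 0) (rep 0) ++
        iterWord (fun i => base (i + 1)) (fun i => rep (i + 1)) k (fun i => e (i + 1)) := by
  simp [iterWord, List.range_succ_eq_map, List.foldr_map]

theorem HasPeriod.append_iterWord {α : Type*} {p : ℕ} (hp : 0 < p) (k : ℕ) :
    ∀ {u : List α} {base rep : ℕ → List α} {e : ℕ → ℕ}, (∀ j, p < e j) →
      HasPeriod (u ++ iterWord base rep k e) p →
      ∀ e' : ℕ → ℕ, HasPeriod (u ++ iterWord base rep k e') p := by
  induction k with
  | zero => exact fun _ h _ => h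
  | succ k ih =>
    intro u base rep e he h e'
    rw [iterWord_succ, ← List.append_assoc, ← List.append_assoc] at h ⊢
    have h₀ := h.append_npow_append hp (he 0) (e' 0)
    exact ih (fun j => he (j + 1)) h₀ _

/-- Lemma on periods of words with iterated factors: if for some `n > p` the word
`v_0 · v_1^n · v_2 · ... · v_{k-1} · v_k^n · v_{k+1}` has period `p`, then for all
choices of exponents `n_1, ..., n_k` the word
`v_0 · v_1^{n_1} · v_2 · ... · v_{k-1} · v_k^{n_k} · v_{k+1}` has period `p`. -/
theorem periods_iterated_factors {α : Type*} (base rep : ℕ → List α) (k p : ℕ)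
    (hp : 1 ≤ p)
    (h : ∃ n, p < n ∧ HasPeriod (iterWord base rep k (fun _ => n)) p) :
    ∀ e : ℕ → ℕ, HasPeriod (iterWord base rep k e) p := by
  obtain ⟨n, hn, hper⟩ := h
  exact HasPeriod.append_iterWord (u := []) hp k (fun _ => hn) hper
end

section
/- Consider words v_0^{(n1,n2)}, v_2^{(n1,n2)}, v_4^{(n1,n2)} each of the form u_0 · u_1^{m_{i_1}} · u_2 · ... · u_{k-1} · u_k^{m_{i_k}} · u_{k+1} where each exponent m_{i_j} is n1 or n2, and fixed words w_0, w_1, w_2, w_3, w_4 with v_1, v_3 nonempty. If for all n1, n2 ∈ ℕ the equation v_0^{(n1,n2)} · v_1^{n1} · v_2^{(n1,n2)} · v_3^{n2} · v_4^{(n1,n2)} = w_0 · w_1^{n2} · w_2 · w_3^{n1} · w_4 holds, then for all n1, n2 ∈ ℕ the word v_1 · v_1^{n1} · v_2^{(n1,n2)} · v_3^{n2} · v_3 has period gcd(|v_1|, |v_3|). -/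
/-- Selector for exponents: each exponent is either `n1` or `n2`,
as prescribed by the boolean choice `s`. -/
def sel (s : ℕ → Bool) (n1 n2 : ℕ) : ℕ → ℕ :=
  fun j => if s j then n1 else n2

theorem Nat.exists_mem_Ico_modEq {p : ℕ} (hp : 0 < p) (a i : ℕ) :
    ∃ c ∈ Set.Ico a (a + p), c ≡ i [MOD p] := by
  have hap : a ≤ p * a := Nat.le_mul_of_pos_left a hp
  refine ⟨a + (i + p * a - a) % p,
    ⟨by omega, by have := Nat.mod_lt (i + p * a - a) hp; omega⟩, ?_⟩
  calc (a + (i + p * a - a) % p) % p = (i + p * a) % p := by rw [Nat.add_mod_mod]; congr 1; omega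
    _ = i % p := Nat.add_mul_mod_self_left i p a

theorem Nat.exists_ge_modEq {g : ℕ} (hg : 0 < g) (n N : ℕ) : ∃ m ≥ N, n ≡ m [MOD g] :=
  ⟨n + g * N, (Nat.le_mul_of_pos_left N hg).trans (Nat.le_add_left _ _),
    (Nat.add_mul_mod_self_left n g N).symm⟩

namespace List

variable {α : Type*}

theorem getElem?_append_append_length_add {x y z : List α} {s : ℕ} (hs : s < y.length) :
    (x ++ y ++ z)[x.length + s]? = y[s]? := by
  rw [append_assoc, getElem?_append_right (by omega), Nat.add_sub_cancel_left,
    getElem?_append_left hs]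

theorem exists_eq_append_append_of_append_eq {x y z x' y' z' : List α}
    (h : x ++ y ++ z = x' ++ y' ++ z') (h₁ : x.length ≤ x'.length)
    (h₂ : x'.length + y'.length ≤ x.length + y.length) :
    ∃ p s, y = p ++ y' ++ s ∧ p.length = x'.length - x.length := by
  obtain ⟨p, rfl⟩ : x <+: x' :=
    prefix_of_prefix_length_le (h ▸ prefix_append_of_prefix (prefix_append _ _))
      (prefix_append_of_prefix (prefix_append _ _)) h₁
  simp only [append_assoc, append_cancel_left_eq] at h
  obtain ⟨s, hs⟩ : p ++ y' <+: y := by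
    refine prefix_of_prefix_length_le (l₃ := y ++ z) ?_ (prefix_append _ _) ?_
    · rw [h, ← append_assoc]; exact prefix_append _ _
    · simp only [length_append] at h₂ ⊢; omega
  exact ⟨p, s, by simp [← hs], by simp⟩

theorem exists_infix_infix_of_append_eq {x y z x' y' z' : List α}
    (h : x ++ y ++ z = x' ++ y' ++ z') {u n : ℕ} (h₁ : x.length ≤ u) (h₂ : x'.length ≤ u)
    (h₃ : u + n ≤ x.length + y.length) (h₄ : u + n ≤ x'.length + y'.length) :
    ∃ w : List α, w.length = n ∧ w <:+: y ∧ w <:+: y' := by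
  set L := x' ++ y' ++ z'
  have hL : L.length ≥ u + n := by simp [L]; omega
  have hsplit : L.take u ++ (L.drop u).take n ++ (L.drop u).drop n = L := by
    rw [append_assoc, take_append_drop, take_append_drop]
  have hu : (L.take u).length = u := by simp; omega
  have hn : ((L.drop u).take n).length = n := by simp; omega
  obtain ⟨p, s, hy, -⟩ := exists_eq_append_append_of_append_eq (h.trans hsplit.symm)
    (by omega) (by omega)
  obtain ⟨p', s', hy', -⟩ := exists_eq_append_append_of_append_eq hsplit.symm
    (by omega) (by omega)
  exact ⟨_, hn, ⟨p, s, hy.symm⟩, ⟨p', s', hy'.symm⟩⟩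

theorem HasPeriod.getElem?_eq_of_modEq {w : List α} {p i j : ℕ} (h : w.HasPeriod p)
    (hi : i < w.length) (hj : j < w.length) (hij : i ≡ j [MOD p]) : w[i]? = w[j]? := by
  rw [← h.getElem?_mod p i w hi, ← h.getElem?_mod p j w hj, hij]

/-- Every position is congruent mod `p` to one in the first `p` letters of the factor. -/
theorem HasPeriod.of_infix {w u : List α} {p q : ℕ} (hw : w.HasPeriod p) (hu : u.HasPeriod q)
    (huw : u <:+: w) (hlen : p + q ≤ u.length) (hp : 0 < p) : w.HasPeriod q := by
  obtain ⟨a, b, rfl⟩ := huw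
  rw [hasPeriod_iff_getElem?] at hu ⊢
  intro i hi
  simp only [length_append] at hi
  obtain ⟨c, ⟨hac, hca⟩, hci⟩ := Nat.exists_mem_Ico_modEq hp a.length i
  have hc : (a ++ u ++ b)[c]? = (a ++ u ++ b)[c + q]? := by
    obtain ⟨s, rfl⟩ := Nat.exists_eq_add_of_le hac
    rw [getElem?_append_append_length_add (by omega), Nat.add_assoc,
      getElem?_append_append_length_add (by omega)]
    exact hu s (by omega)
  calc (a ++ u ++ b)[i]? = (a ++ u ++ b)[c]? :=
        hw.getElem?_eq_of_modEq (by simp; omega) (by simp; omega) hci.symm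
    _ = (a ++ u ++ b)[c + q]? := hc
    _ = (a ++ u ++ b)[i + q]? :=
        hw.getElem?_eq_of_modEq (by simp; omega) (by simp; omega) (hci.add_right q)

end List

namespace WordEquation

variable {α : Type*}

theorem npow_succ (n : ℕ) (v : List α) : npow (n + 1) v = v ++ npow n v := by
  simp [npow, List.replicate_succ]

theorem npow_succ' (n : ℕ) (v : List α) : npow (n + 1) v = npow n v ++ v := by
  rw [npow, npow, List.replicate_succ', List.flatten_append, List.flatten_singleton]

theorem npow_add (m n : ℕ) (v : List α) : npow (m + n) v = npow m v ++ npow n v := by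
  rw [npow, npow, npow, List.replicate_add, List.flatten_append]

@[simp]
theorem length_npow (n : ℕ) (v : List α) : (npow n v).length = n * v.length := by
  simp [npow]

theorem npow_prefix_npow {m n : ℕ} (h : m ≤ n) (v : List α) : npow m v <+: npow n v := by
  obtain ⟨k, rfl⟩ := Nat.exists_eq_add_of_le h
  rw [npow_add]
  exact List.prefix_append _ _

theorem hasPeriod_npow (n : ℕ) (v : List α) : List.HasPeriod (npow n v) v.length := by
  cases n with
  | zero => simp [npow]
  | succ n =>
    have : List.take v.length (npow (n + 1) v) = v := by simp [npow_succ]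
    rw [List.HasPeriod, this, ← npow_succ]
    exact npow_prefix_npow (Nat.le_succ _) v

theorem iterWord_succ (base rep : ℕ → List α) (k : ℕ) (e : ℕ → ℕ) :
    iterWord base rep (k + 1) e = base 0 ++ npow (e 0) (rep 0) ++
      iterWord (fun j => base (j + 1)) (fun j => rep (j + 1)) k (fun j => e (j + 1)) := by
  rw [iterWord, List.range_succ_eq_map, List.foldr_cons, List.foldr_map]
  rfl

theorem length_iterWord (base rep : ℕ → List α) (k : ℕ) (e : ℕ → ℕ) :
    (iterWord base rep k e).length =
      ∑ j ∈ Finset.range (k + 1), (base j).length + ∑ j ∈ Finset.range k, e j * (rep j).length := by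
  induction k generalizing base rep e with
  | zero => simp [iterWord]
  | succ k ih =>
    rw [iterWord_succ, List.length_append, ih, Finset.sum_range_succ' (fun j => (base j).length),
      Finset.sum_range_succ' (fun j => e j * (rep j).length)]
    simp only [List.length_append, length_npow]
    ring

theorem exists_length_iterWord_sel (base rep : ℕ → List α) (k : ℕ) (s : ℕ → Bool) :
    ∃ a b c : ℕ, ∀ x y, (iterWord base rep k (sel s x y)).length = a + b * x + c * y := by
  refine ⟨∑ j ∈ Finset.range (k + 1), (base j).length,
    ∑ j ∈ Finset.range k, if s j then (rep j).length else 0,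
    ∑ j ∈ Finset.range k, if s j then 0 else (rep j).length, fun x y => ?_⟩
  rw [length_iterWord, add_assoc, Finset.sum_mul, Finset.sum_mul, ← Finset.sum_add_distrib]
  congr 1
  refine Finset.sum_congr rfl fun j _ => ?_
  unfold sel
  split_ifs <;> ring

section OccursAt

/-- Infinite words are `ℕ → Option α`, to be compared directly with `List.getElem?`. -/
def OccursAt (w : List α) (z : ℕ → Option α) (π : ℕ) : Prop :=
  ∀ s < w.length, w[s]? = z (π + s)

variable {z : ℕ → Option α} {g π : ℕ}

theorem occursAt_append {x y : List α} :
    OccursAt (x ++ y) z π ↔ OccursAt x z π ∧ OccursAt y z (π + x.length) := by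
  refine ⟨fun h => ⟨fun s hs => ?_, fun s hs => ?_⟩, fun ⟨hx, hy⟩ s hs => ?_⟩
  · rw [← List.getElem?_append_left hs]
    exact h s (by simp; omega)
  · have := h (x.length + s) (by simp; omega)
    rwa [List.getElem?_append_right (by omega), Nat.add_sub_cancel_left, ← Nat.add_assoc] at this
  · rw [List.length_append] at hs
    by_cases hsx : s < x.length
    · rw [List.getElem?_append_left hsx]
      exact hx s hsx
    · rw [List.getElem?_append_right (by omega), hy _ (by omega)]
      congr 1
      omega

theorem OccursAt.of_prefix {x y : List α} (hxy : x <+: y) (h : OccursAt y z π) :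
    OccursAt x z π := by
  obtain ⟨t, rfl⟩ := hxy
  exact (occursAt_append.mp h).1

theorem OccursAt.of_modEq {w : List α} {π' : ℕ} (hz : Function.Periodic z g)
    (hπ : π ≡ π' [MOD g]) (h : OccursAt w z π) : OccursAt w z π' := by
  intro s hs
  rw [h s hs, ← hz.map_mod_nat, ← hz.map_mod_nat (π' + s), hπ.add_right s]

theorem OccursAt.hasPeriod {w : List α} (hz : Function.Periodic z g) (h : OccursAt w z π) :
    HasPeriod w g := by
  intro i hi
  rw [h i (by omega), h (i + g) hi, ← Nat.add_assoc, hz]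

theorem _root_.List.HasPeriod.occursAt {x w y : List α} (h : (x ++ w ++ y).HasPeriod g) :
    OccursAt w (fun i => (x ++ w ++ y)[i % g]?) x.length := by
  intro s hs
  show _ = (x ++ w ++ y)[(x.length + s) % g]?
  rw [h.getElem?_mod g _ _ (by simp; omega), List.getElem?_append_append_length_add hs]

theorem OccursAt.append_append_of_modEq {x y y' t : List α} (hz : Function.Periodic z g)
    (h : OccursAt (x ++ y' ++ t) z π)
    (hy : OccursAt y' z (π + x.length) → OccursAt y z (π + x.length))
    (hlen : y.length ≡ y'.length [MOD g]) : OccursAt (x ++ y ++ t) z π := by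
  simp only [occursAt_append, List.length_append] at h ⊢
  refine ⟨⟨h.1.1, hy h.1.2⟩, h.2.of_modEq hz ?_⟩
  exact Nat.ModEq.add_left _ (Nat.ModEq.add_left _ hlen.symm)

theorem OccursAt.iterWord {base rep : ℕ → List α} {k : ℕ} {e e' : ℕ → ℕ}
    (hz : Function.Periodic z g) (hle : ∀ j, e j ≤ e' j) (hmod : ∀ j, e j ≡ e' j [MOD g])
    (h : OccursAt (iterWord base rep k e') z π) : OccursAt (iterWord base rep k e) z π := by
  induction k generalizing base rep e e' π with
  | zero => exact h
  | succ k ih =>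
    rw [iterWord_succ] at h ⊢
    simp only [occursAt_append, List.length_append, length_npow] at h ⊢
    obtain ⟨⟨hbase, hrep⟩, htail⟩ := h
    refine ⟨⟨hbase, hrep.of_prefix (npow_prefix_npow (hle 0) _)⟩, ?_⟩
    refine (ih (fun j => hle (j + 1)) (fun j => hmod (j + 1)) htail).of_modEq hz ?_
    exact Nat.ModEq.add_left _ (Nat.ModEq.add_left _ ((hmod 0).symm.mul_right _))

end OccursAt

section Covering

theorem length_iterWord_sel_modEq (base rep : ℕ → List α) (k : ℕ) (s : ℕ → Bool)
    {g x y x' y' : ℕ} (hx : x ≡ x' [MOD g]) (hy : y ≡ y' [MOD g]) :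
    (iterWord base rep k (sel s x y)).length ≡
      (iterWord base rep k (sel s x' y')).length [MOD g] := by
  obtain ⟨a, b, c, h⟩ := exists_length_iterWord_sel base rep k s
  rw [h, h]
  exact ((Nat.ModEq.refl a).add (hx.mul_left b)).add (hy.mul_left c)

theorem hasPeriod_of_overlap_npow {x y x' r y' v : List α} {n p : ℕ} (u : ℕ)
    (h : x ++ npow n v ++ y = x' ++ r ++ y') (hr : r.HasPeriod p) (hp : 0 < p)
    (h₁ : x.length ≤ u) (h₂ : x'.length ≤ u) (h₃ : u + (p + v.length) ≤ x.length + n * v.length)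
    (h₄ : u + (p + v.length) ≤ x'.length + r.length) : r.HasPeriod v.length := by
  obtain ⟨w, hw, hwv, hwr⟩ :=
    List.exists_infix_infix_of_append_eq h h₁ h₂ (by simpa using h₃) h₄
  exact hr.of_infix ((hasPeriod_npow n v).infix hwv) hwr hw.ge hp

variable {b2 r2 : ℕ → List α} {k2 : ℕ} {s2 : ℕ → Bool} {v1 v3 : List α}

theorem hasPeriod_gcd_of_covered {A C W w0 w1 : List α} {n1 n2 m1 m2 : ℕ}
    (h : A ++ npow m1 v1 ++ iterWord b2 r2 k2 (sel s2 m1 m2) ++ npow m2 v3 ++ C =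
      w0 ++ npow m2 w1 ++ W)
    (hw1 : 0 < w1.length) (hn1 : n1 < m1) (hn2 : n2 < m2)
    (hm1 : n1 ≡ m1 [MOD v1.length.gcd v3.length]) (hm2 : n2 ≡ m2 [MOD v1.length.gcd v3.length])
    (hstart : w0.length + w1.length + (n1 + 2) * v1.length ≤ m1 * v1.length)
    (hend : A.length + m1 * v1.length + (iterWord b2 r2 k2 (sel s2 m1 m2)).length +
      w1.length + (n2 + 1) * v3.length ≤ w0.length + m2 * w1.length)
    (hv3 : w1.length + v3.length ≤ m2 * v3.length) :
    HasPeriod (v1 ++ npow n1 v1 ++ iterWord b2 r2 k2 (sel s2 n1 n2) ++ npow n2 v3 ++ v3)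
      (v1.length.gcd v3.length) := by
  set g := v1.length.gcd v3.length
  set B := iterWord b2 r2 k2 (sel s2 m1 m2)
  obtain ⟨d1, rfl⟩ : ∃ d, m1 = d + (n1 + 1) := ⟨m1 - (n1 + 1), by omega⟩
  obtain ⟨d2, rfl⟩ : ∃ d, m2 = (n2 + 1) + d := ⟨m2 - (n2 + 1), by omega⟩
  have hv1len : (d1 + (n1 + 1)) * v1.length = d1 * v1.length + (v1.length + n1 * v1.length) := by
    ring
  have hv1len' : (n1 + 2) * v1.length = v1.length + (v1.length + n1 * v1.length) := by ring
  have hv3len : (n2 + 1) * v3.length = n2 * v3.length + v3.length := by ring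
  set R := npow (n2 + 1 + d2) w1
  have hRlen : R.length = (n2 + 1 + d2) * w1.length := length_npow _ w1
  have hRv1 : R.HasPeriod v1.length :=
    hasPeriod_of_overlap_npow (A.length + d1 * v1.length - w1.length)
      (y := B ++ npow (n2 + 1 + d2) v3 ++ C) (by simpa only [List.append_assoc] using h)
      (hasPeriod_npow _ w1) hw1 (by omega) (by omega) (by omega) (by omega)
  have hRv3 : R.HasPeriod v3.length :=
    hasPeriod_of_overlap_npow (A.length + (d1 + (n1 + 1)) * v1.length + B.length)
      (x := A ++ npow (d1 + (n1 + 1)) v1 ++ B) (by simpa only [List.append_assoc] using h)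
      (hasPeriod_npow _ w1) hw1 (by simp only [List.length_append, length_npow]; omega) (by omega)
      (by simp only [List.length_append, length_npow]; omega) (by omega)
  have hRg : R.HasPeriod g := hRv1.gcd hRv3 (by omega)
  set M := v1 ++ npow n1 v1 ++ B ++ (npow n2 v3 ++ v3)
  have hM : A ++ npow d1 v1 ++ M ++ (npow d2 v3 ++ C) = w0 ++ R ++ W := by
    rw [← h, npow_add, npow_succ, npow_add, npow_succ']
    simp only [M, List.append_assoc]
  obtain ⟨P, S, hR, -⟩ := List.exists_eq_append_append_of_append_eq hM.symm
    (by simp only [List.length_append, length_npow]; omega)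
    (by simp only [M, List.length_append, length_npow]; omega)
  rw [hR] at hRg
  have hz : Function.Periodic (fun i => (P ++ M ++ S)[i % g]?) g := fun i => by simp
  have hMn := hRg.occursAt.append_append_of_modEq hz (y := iterWord b2 r2 k2 (sel s2 n1 n2))
    (fun hB => hB.iterWord hz (fun j => by unfold sel; split <;> omega)
      (fun j => by unfold sel; split <;> assumption))
    (length_iterWord_sel_modEq b2 r2 k2 s2 hm1 hm2)
  simpa only [List.append_assoc] using hMn.hasPeriod hz

end Covering

end WordEquation

/-- Word equation lemma: the parametrized words `v_0^{(n1,n2)}`, `v_2^{(n1,n2)}`,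
`v_4^{(n1,n2)}` have the shape `u_0 · u_1^{m_{i_1}} · ... · u_k^{m_{i_k}} · u_{k+1}`
with each exponent equal to `n1` or `n2`.  If for all `n1, n2` the equation
`v_0^{(n1,n2)} · v_1^{n1} · v_2^{(n1,n2)} · v_3^{n2} · v_4^{(n1,n2)}
  = w_0 · w_1^{n2} · w_2 · w_3^{n1} · w_4` holds (with `v_1, v_3` nonempty),
then for all `n1, n2` the word `v_1 · v_1^{n1} · v_2^{(n1,n2)} · v_3^{n2} · v_3`
has period `gcd(|v_1|, |v_3|)`. -/
theorem oneway_vs_twoway_word_equation {α : Type*}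
    (b0 r0 b2 r2 b4 r4 : ℕ → List α) (k0 k2 k4 : ℕ) (s0 s2 s4 : ℕ → Bool)
    (v1 v3 w0 w1 w2 w3 w4 : List α)
    (hv1 : v1 ≠ []) (hv3 : v3 ≠ [])
    (heq : ∀ n1 n2 : ℕ,
      iterWord b0 r0 k0 (sel s0 n1 n2) ++ npow n1 v1 ++
        iterWord b2 r2 k2 (sel s2 n1 n2) ++ npow n2 v3 ++
        iterWord b4 r4 k4 (sel s4 n1 n2)
      = w0 ++ npow n2 w1 ++ w2 ++ npow n1 w3 ++ w4) :
    ∀ n1 n2 : ℕ,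
      HasPeriod
        (v1 ++ npow n1 v1 ++ iterWord b2 r2 k2 (sel s2 n1 n2) ++ npow n2 v3 ++ v3)
        (Nat.gcd v1.length v3.length) := by
  intro n1 n2
  have hv1 := List.length_pos_iff.mpr hv1
  have hv3 := List.length_pos_iff.mpr hv3
  obtain ⟨a0, a1, a2, hA⟩ := WordEquation.exists_length_iterWord_sel b0 r0 k0 s0
  obtain ⟨c0, c1, c2, hB⟩ := WordEquation.exists_length_iterWord_sel b2 r2 k2 s2
  obtain ⟨d0, d1, d2, hC⟩ := WordEquation.exists_length_iterWord_sel b4 r4 k4 s4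
  have hw1 : w1.length = a2 + c2 + d2 + v3.length := by
    have h00 := congrArg List.length (heq 0 0)
    have h01 := congrArg List.length (heq 0 1)
    simp only [List.length_append, WordEquation.length_npow, hA, hB, hC] at h00 h01
    omega
  have hg := Nat.gcd_pos_of_pos_left v3.length hv1
  obtain ⟨m1, hm1N, hm1⟩ := Nat.exists_ge_modEq hg n1 (w0.length + w1.length + n1 + 2)
  obtain ⟨m2, hm2N, hm2⟩ := Nat.exists_ge_modEq hg n2
    (a0 + a1 * m1 + m1 * v1.length + c0 + c1 * m1 + w1.length + (n2 + 2) * v3.length + n2 + 1)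
  refine WordEquation.hasPeriod_gcd_of_covered (W := w2 ++ npow m1 w3 ++ w4)
    (by simpa only [List.append_assoc] using heq m1 m2) (by omega) (by omega) (by omega) hm1 hm2
    (by nlinarith) ?_ (by nlinarith)
  rw [hA, hB, hw1]
  nlinarith
end

section
/- If w1 = w1' · w has period p1, w2 = w · w2' has period p2, and |w| ≥ p1 + p2 - gcd(p1,p2), then w1' · w · w2' has period gcd(p1,p2). -/
section FWaux

variable {α : Type*}

lemma period_mul {w : List α} {g : ℕ} (h : HasPeriod w g) :
    ∀ m i, i + m * g < w.length → w[i]? = w[(i + m * g)]? := by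
  intro m
  induction m with
  | zero => intro i _; simp
  | succ m ih =>
    intro i hi
    rw [Nat.succ_mul] at hi ⊢
    have e1 : w[i]? = w[(i + g)]? := h i (by omega)
    have e2 : w[(i + g)]? = w[(i + g + m * g)]? := ih (i + g) (by omega)
    rw [e1, e2]; congr 1; omega

lemma hasPeriod_drop {w : List α} {p : ℕ} (h : HasPeriod w p) (k : ℕ) :
    HasPeriod (w.drop k) p := by
  intro i hi
  rw [List.length_drop] at hi
  rw [List.getElem?_drop, List.getElem?_drop]
  have := h (k + i) (by omega)
  rw [this]; congr 1; omega

lemma hasPeriod_prefix {w t : List α} {p : ℕ} (h : HasPeriod (w ++ t) p) :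
    HasPeriod w p := by
  intro i hi
  have := h i (by rw [List.length_append]; omega)
  rwa [List.getElem?_append_left (by omega), List.getElem?_append_left (by omega)] at this

lemma hasPeriod_reverse {w : List α} {p : ℕ} (h : HasPeriod w p) :
    HasPeriod w.reverse p := by
  intro i hi
  rw [List.length_reverse] at hi
  rw [List.getElem?_reverse (by omega), List.getElem?_reverse (by omega)]
  have e : w.length - 1 - i = (w.length - 1 - (i + p)) + p := by omega
  rw [e]
  exact (h _ (by omega)).symm

/-- If `u` has period `P`, its suffix starting at `k` has period `g ∣ P`,
and that suffix has length at least `P`, then all of `u` has period `g`. -/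
lemma ext_left {u : List α} {P g k : ℕ} (hg : 1 ≤ g) (hP : 1 ≤ P) (hgP : g ∣ P)
    (hper : HasPeriod u P) (hsuf : HasPeriod (u.drop k) g) (hk : k + P ≤ u.length) :
    HasPeriod u g := by
  have hgle : g ≤ P := Nat.le_of_dvd (by omega) hgP
  have main : ∀ d i, k ≤ i + d → i + g < u.length → u[i]? = u[(i + g)]? := by
    intro d
    induction d with
    | zero =>
      intro i hki hig
      have h := hsuf (i - k) (by rw [List.length_drop]; omega)
      rw [List.getElem?_drop, List.getElem?_drop] at h
      have e1 : k + (i - k) = i := by omega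
      have e2 : k + (i - k + g) = i + g := by omega
      rwa [e1, e2] at h
    | succ d ih =>
      intro i hki hig
      by_cases hik : k ≤ i
      · have h := hsuf (i - k) (by rw [List.length_drop]; omega)
        rw [List.getElem?_drop, List.getElem?_drop] at h
        have e1 : k + (i - k) = i := by omega
        have e2 : k + (i - k + g) = i + g := by omega
        rwa [e1, e2] at h
      · push_neg at hik
        have hiP : i + P < u.length := by omega
        have e1 : u[i]? = u[(i + P)]? := hper i hiP
        by_cases hgP2 : i + g + P < u.length
        · have e2 : u[(i + g)]? = u[(i + g + P)]? := hper (i + g) hgP2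
          have e3 : u[(i + P)]? = u[(i + P + g)]? := ih (i + P) (by omega) (by omega)
          rw [e1, e3, e2]; congr 1; omega
        · push_neg at hgP2
          obtain ⟨t, ht⟩ := hgP
          rcases t with _ | s
          · exfalso; simp at ht; omega
          · have hP' : P = s * g + g := by rw [ht]; ring
            have hkg : k ≤ i + g := by omega
            have h := period_mul hsuf s (i + g - k) (by rw [List.length_drop]; omega)
            rw [List.getElem?_drop, List.getElem?_drop] at h
            have e2 : k + (i + g - k) = i + g := by omega
            have e3 : k + (i + g - k + s * g) = i + P := by omega
            rw [e2, e3] at h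
            rw [e1]
            exact h.symm
  intro i hig
  exact main k i (by omega) hig

/-- Mirror version: prefix of length ≥ P has period `g ∣ P`. -/
lemma ext_right {w b : List α} {P g : ℕ} (hg : 1 ≤ g) (hP1 : 1 ≤ P) (hgP : g ∣ P)
    (hper : HasPeriod (w ++ b) P) (hw : HasPeriod w g) (hP : P ≤ w.length) :
    HasPeriod (w ++ b) g := by
  have h1 : HasPeriod (w ++ b).reverse P := hasPeriod_reverse hper
  have hrev : (w ++ b).reverse = b.reverse ++ w.reverse := by simp
  have h2 : HasPeriod ((w ++ b).reverse.drop b.reverse.length) g := by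
    rw [hrev, List.drop_left]
    exact hasPeriod_reverse hw
  have h3 := ext_left hg hP1 hgP h1 h2 (by simp; omega)
  have h4 := hasPeriod_reverse h3
  rwa [List.reverse_reverse] at h4

lemma fine_wilf_core : ∀ (n : ℕ) (w : List α) (p q : ℕ), p + q ≤ n → 1 ≤ p → 1 ≤ q →
    HasPeriod w p → HasPeriod w q → p + q - Nat.gcd p q ≤ w.length →
    HasPeriod w (Nat.gcd p q) := by
  intro n
  induction n with
  | zero => intro w p q h hp _ _ _ _; omega
  | succ n ih =>
    intro w p q hn hp hq hwp hwq hlen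
    rcases lt_trichotomy p q with hlt | heq | hgt
    · -- p < q : use periods p and q - p on w.drop p
      have hgd : Nat.gcd p (q - p) = Nat.gcd p q := by
        conv_rhs => rw [show q = (q - p) + p by omega]
        rw [Nat.gcd_add_self_right]
      have hg1 : 1 ≤ Nat.gcd p q := Nat.gcd_pos_of_pos_left q hp
      have hgle : Nat.gcd p q ≤ p := Nat.le_of_dvd hp (Nat.gcd_dvd_left p q)
      have hdvd : Nat.gcd p q ∣ q - p := Nat.dvd_sub (Nat.gcd_dvd_right p q) (Nat.gcd_dvd_left p q)
      have hqp : Nat.gcd p q ≤ q - p := Nat.le_of_dvd (by omega) hdvd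
      have hs_p : HasPeriod (w.drop p) p := hasPeriod_drop hwp p
      have hs_qp : HasPeriod (w.drop p) (q - p) := by
        intro i hi
        rw [List.length_drop] at hi
        rw [List.getElem?_drop, List.getElem?_drop]
        have e1 := hwp i (by omega)
        have e2 := hwq i (by omega)
        have e3 : p + (i + (q - p)) = i + q := by omega
        rw [e3, ← e2, Nat.add_comm p i]
        exact e1.symm
      have hIH := ih (w.drop p) p (q - p) (by omega) hp (by omega) hs_p hs_qp
        (by rw [List.length_drop, hgd]; omega)
      rw [hgd] at hIH
      exact ext_left hg1 hp (Nat.gcd_dvd_left p q) hwp hIH (by omega)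
    · subst heq
      rw [Nat.gcd_self]
      exact hwp
    · -- q < p : use periods q and p - q on w.drop q
      have hgd : Nat.gcd q (p - q) = Nat.gcd p q := by
        rw [Nat.gcd_comm p q]
        conv_rhs => rw [show p = (p - q) + q by omega]
        rw [Nat.gcd_add_self_right]
      have hg1 : 1 ≤ Nat.gcd p q := Nat.gcd_pos_of_pos_left q hp
      have hgle : Nat.gcd p q ≤ q := Nat.le_of_dvd hq (Nat.gcd_dvd_right p q)
      have hdvd : Nat.gcd p q ∣ p - q := Nat.dvd_sub (Nat.gcd_dvd_left p q) (Nat.gcd_dvd_right p q)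
      have hpq : Nat.gcd p q ≤ p - q := Nat.le_of_dvd (by omega) hdvd
      have hs_q : HasPeriod (w.drop q) q := hasPeriod_drop hwq q
      have hs_pq : HasPeriod (w.drop q) (p - q) := by
        intro i hi
        rw [List.length_drop] at hi
        rw [List.getElem?_drop, List.getElem?_drop]
        have e1 := hwq i (by omega)
        have e2 := hwp i (by omega)
        have e3 : q + (i + (p - q)) = i + p := by omega
        rw [e3, ← e2, Nat.add_comm q i]
        exact e1.symm
      have hIH := ih (w.drop q) q (p - q) (by omega) hq (by omega) hs_q hs_pq
        (by rw [List.length_drop, hgd]; omega)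
      rw [hgd] at hIH
      exact ext_left hg1 hq (Nat.gcd_dvd_right p q) hwq hIH (by omega)

end FWaux

/-- Gluing form of Fine–Wilf: if `w1 = w1' · w` has period `p1`,
`w2 = w · w2'` has period `p2`, and `|w| ≥ p1 + p2 - gcd(p1,p2)`,
then `w1' · w · w2'` has period `gcd(p1,p2)`. -/
theorem fine_wilf_gluing {α : Type*} (w1' w w2' : List α) (p1 p2 : ℕ)
    (hp1 : 1 ≤ p1) (hp2 : 1 ≤ p2)
    (h1 : HasPeriod (w1' ++ w) p1)
    (h2 : HasPeriod (w ++ w2') p2)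
    (hlen : p1 + p2 - Nat.gcd p1 p2 ≤ w.length) :
    HasPeriod (w1' ++ w ++ w2') (Nat.gcd p1 p2) := by
  obtain ⟨g, hgdef⟩ : ∃ g, Nat.gcd p1 p2 = g := ⟨_, rfl⟩
  rw [hgdef] at hlen ⊢
  have hgp1 : g ∣ p1 := hgdef ▸ Nat.gcd_dvd_left p1 p2
  have hgp2 : g ∣ p2 := hgdef ▸ Nat.gcd_dvd_right p1 p2
  have hg1 : 1 ≤ g := hgdef ▸ Nat.gcd_pos_of_pos_left p2 hp1
  have hgle1 : g ≤ p1 := Nat.le_of_dvd hp1 hgp1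
  have hgle2 : g ≤ p2 := Nat.le_of_dvd hp2 hgp2
  have hwp1 : HasPeriod w p1 := by
    have := hasPeriod_drop h1 w1'.length
    rwa [List.drop_left] at this
  have hwp2 : HasPeriod w p2 := hasPeriod_prefix h2
  have hwg : HasPeriod w g := by
    have := fine_wilf_core (p1 + p2) w p1 p2 le_rfl hp1 hp2 hwp1 hwp2
      (by rw [hgdef]; exact hlen)
    rwa [hgdef] at this
  have hu : HasPeriod (w1' ++ w) g :=
    ext_left hg1 hp1 hgp1 h1 (by rwa [List.drop_left]) (by rw [List.length_append]; omega)
  have hv : HasPeriod (w ++ w2') g := ext_right hg1 hp2 hgp2 h2 hwg (by omega)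
  intro i hi
  rw [List.length_append, List.length_append] at hi
  by_cases hcase : i + g < w1'.length + w.length
  · have g1 : (w1' ++ w ++ w2')[i]? = (w1' ++ w)[i]? :=
      List.getElem?_append_left (by rw [List.length_append]; omega)
    have g2 : (w1' ++ w ++ w2')[(i + g)]? = (w1' ++ w)[(i + g)]? :=
      List.getElem?_append_left (by rw [List.length_append]; omega)
    rw [g1, g2]
    exact hu i (by rw [List.length_append]; omega)
  · push_neg at hcase
    have hia : w1'.length ≤ i := by omega
    have g1 : (w1' ++ (w ++ w2'))[i]? = (w ++ w2')[(i - w1'.length)]? :=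
      List.getElem?_append_right hia
    have g2 : (w1' ++ (w ++ w2'))[i + g]? = (w ++ w2')[(i + g - w1'.length)]? :=
      List.getElem?_append_right (by omega)
    rw [List.append_assoc, g1, g2]
    have e : i + g - w1'.length = i - w1'.length + g := by omega
    rw [e]
    exact hv (i - w1'.length) (by rw [List.length_append]; omega)
end

section
/- Let S be a finite semigroup with |S| ≤ E and let f : {1,...,n} → S with n > 2^{3E} assign an element to each leaf interval of a linearly ordered set; then (by the factorization forest theorem applied with height bound 3E) there exist indices i < j < k such that the products f over [i,j], over [j,k], and over [i,k] are all equal to the same idempotent element e = e·e of S. -/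
set_option linter.unusedSectionVars false
/-- `iprod f i j` is the semigroup product `f (i+1) * f (i+2) * ... * f j`
of the factors of the sequence `f` over the interval `(i, j]`. -/
def iprod {S : Type*} [Semigroup S] (f : ℕ → S) (i j : ℕ) : S :=
  ((List.range (j - i - 1)).map fun t => f (i + 2 + t)).foldl (· * ·) (f (i + 1))

lemma iprod_base {S : Type*} [Semigroup S] (f : ℕ → S) (i : ℕ) :
    iprod f i (i + 1) = f (i + 1) := by
  simp [iprod, Nat.succ_sub_one]

lemma iprod_succ {S : Type*} [Semigroup S] (f : ℕ → S) {i j : ℕ} (h : i < j) :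
    iprod f i (j + 1) = iprod f i j * f (j + 1) := by
  unfold iprod
  have h1 : j + 1 - i - 1 = (j - i - 1) + 1 := by omega
  have h2 : i + 2 + (j - i - 1) = j + 1 := by omega
  rw [h1, List.range_succ, List.map_append, List.foldl_append]
  simp [h2]

lemma iprod_mul {S : Type*} [Semigroup S] (f : ℕ → S) {i j k : ℕ}
    (hij : i < j) (hjk : j < k) : iprod f i j * iprod f j k = iprod f i k := by
  induction k, hjk using Nat.le_induction with
  | base => rw [iprod_base, iprod_succ f hij]
  | succ k hk ih =>
      rw [iprod_succ f hk, iprod_succ f (lt_trans hij hk), ← mul_assoc, ih]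

section MonoidFacts
variable {M : Type*} [Monoid M] [Finite M]

lemma exists_idem_pow (a : M) : ∃ k, 1 ≤ k ∧ a ^ k * a ^ k = a ^ k := by
  obtain ⟨x, y, hxy, hfe⟩ := Finite.exists_ne_map_eq_of_infinite (fun n : ℕ => a ^ n)
  wlog hlt : x < y generalizing x y
  · exact this y x hxy.symm hfe.symm (by omega)
  set d := y - x with hd
  have hd1 : 1 ≤ d := by omega
  have hper : ∀ N, x ≤ N → a ^ (N + d) = a ^ N := by
    intro N hN
    have : N + d = (N - x) + y := by omega
    rw [this, pow_add, ← hfe, ← pow_add]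
    congr 1; omega
  have hper' : ∀ t N, x ≤ N → a ^ (N + t * d) = a ^ N := by
    intro t
    induction t with
    | zero => simp
    | succ t ih =>
        intro N hN
        have : N + (t + 1) * d = (N + d) + t * d := by ring
        rw [this, ih (N + d) (by omega), hper N hN]
  refine ⟨(x + 1) * d, by nlinarith, ?_⟩
  rw [← pow_add]
  have : (x + 1) * d + (x + 1) * d = (x + 1) * d + (x + 1) * d := rfl
  exact hper' (x + 1) ((x + 1) * d) (by nlinarith)

/-- `a ≤_J b` in a monoid. -/
def jle (a b : M) : Prop := ∃ x y : M, a = x * b * y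

lemma jle_refl (a : M) : jle a a := ⟨1, 1, by simp⟩

lemma jle_trans {a b c : M} (h1 : jle a b) (h2 : jle b c) : jle a c := by
  obtain ⟨x, y, h1⟩ := h1; obtain ⟨x', y', h2⟩ := h2
  exact ⟨x * x', y' * y, by rw [h1, h2]; simp [mul_assoc]⟩

def jequiv (a b : M) : Prop := jle a b ∧ jle b a

lemma jequiv_refl (a : M) : jequiv a a := ⟨jle_refl a, jle_refl a⟩

lemma rstab {a s : M} (h : jle a (a * s)) : ∃ w, a * s * w = a := by
  obtain ⟨x, y, hxy⟩ := h
  have key : ∀ k, a = x ^ k * a * (s * y) ^ k := by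
    intro k
    induction k with
    | zero => simp
    | succ k ih =>
        calc a = x * (a * s) * y := hxy
        _ = x * ((x ^ k * a * (s * y) ^ k) * s) * y := by rw [← ih]
        _ = x ^ (k + 1) * a * (s * y) ^ (k + 1) := by
            rw [pow_succ', pow_succ]
            simp [mul_assoc]
  obtain ⟨k, hk1, hidem⟩ := exists_idem_pow (s * y)
  have ha : a * (s * y) ^ k = a := by
    conv_lhs => rw [key k]
    rw [mul_assoc, hidem, ← key k]
  refine ⟨y * (s * y) ^ (k - 1), ?_⟩
  have : s * (y * (s * y) ^ (k - 1)) = (s * y) ^ k := by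
    rw [← mul_assoc]
    conv_rhs => rw [show k = (k - 1) + 1 by omega, pow_succ']
  rw [mul_assoc, this, ha]

lemma lstab {a s : M} (h : jle a (s * a)) : ∃ w, w * (s * a) = a := by
  obtain ⟨x, y, hxy⟩ := h
  have key : ∀ k, a = (x * s) ^ k * a * y ^ k := by
    intro k
    induction k with
    | zero => simp
    | succ k ih =>
        calc a = x * (s * a) * y := hxy
        _ = x * (s * ((x * s) ^ k * a * y ^ k)) * y := by rw [← ih]
        _ = (x * s) ^ (k + 1) * a * y ^ (k + 1) := by
            rw [pow_succ', pow_succ]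
            simp [mul_assoc]
  obtain ⟨k, hk1, hidem⟩ := exists_idem_pow (x * s)
  have ha : (x * s) ^ k * a = a := by
    conv_lhs => rw [key k]
    rw [← mul_assoc, ← mul_assoc, hidem]
    rw [← key k]
  refine ⟨(x * s) ^ (k - 1) * x, ?_⟩
  have : ((x * s) ^ (k - 1) * x) * (s * a) = (x * s) ^ k * a := by
    conv_rhs => rw [show k = (k - 1) + 1 by omega, pow_succ]
    simp [mul_assoc]
  rw [this, ha]

end MonoidFacts

section Smooth
variable {S : Type*} [Semigroup S] [Fintype S]

instance : Finite (WithOne S) := Finite.of_equiv (Option S) (Equiv.refl _)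

/-- the color of interval (i,j], in the monoid `WithOne S`. -/
def ch (f : ℕ → S) (i j : ℕ) : WithOne S :=
  WithOne.coe (iprod f i j)

lemma ch_mul (f : ℕ → S) {i j k : ℕ} (hij : i < j) (hjk : j < k) :
    ch f i j * ch f j k = ch f i k := by
  rw [ch, ch, ch, ← WithOne.coe_mul, iprod_mul f hij hjk]

/-- no idempotent triple inside `s` -/
def Tfree (f : ℕ → S) (s : Finset ℕ) : Prop :=
  ¬ ∃ i j k : ℕ, i ∈ s ∧ j ∈ s ∧ k ∈ s ∧ i < j ∧ j < k ∧
      iprod f i j = iprod f j k ∧ IsIdempotentElem (iprod f i j)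

lemma Tfree.mono {f : ℕ → S} {s t : Finset ℕ} (h : Tfree f t) (hst : s ⊆ t) :
    Tfree f s := by
  intro ⟨i, j, k, hi, hj, hk, h'⟩
  exact h ⟨i, j, k, hst hi, hst hj, hst hk, h'⟩

lemma smooth (f : ℕ → S) (AJ : Finset (WithOne S)) (c : WithOne S) (C : Finset ℕ)
    (hcol : ∀ u ∈ C, ∀ v ∈ C, u < v → ch f u v ∈ AJ ∧ jequiv (ch f u v) c)
    (hfree : Tfree f C) :
    C.card ≤ 2 * AJ.card ^ 2 + 2 := by
  classical
  by_contra hbig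
  push_neg at hbig
  have hC1 : 1 < C.card := by
    have := Nat.zero_le (AJ.card ^ 2); omega
  have hCne : C.Nonempty := Finset.card_pos.mp (by omega)
  set y0 := C.min' hCne with hy0
  set ye := C.max' hCne with hye
  have hy0e : y0 < ye := Finset.min'_lt_max'_of_card C hC1
  have hy0C : y0 ∈ C := C.min'_mem hCne
  have hyeC : ye ∈ C := C.max'_mem hCne
  set D := (C.erase y0).erase ye with hD
  have hDcard : C.card - 2 ≤ D.card := by
    have h1 := Finset.pred_card_le_card_erase (a := y0) (s := C)
    have h2 := Finset.pred_card_le_card_erase (a := ye) (s := C.erase y0)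
    rw [← hD] at h2
    omega
  have hDmem : ∀ x ∈ D, x ∈ C ∧ y0 < x ∧ x < ye := by
    intro x hx
    have hx1 : x ≠ ye := Finset.ne_of_mem_erase hx
    have hx2 : x ≠ y0 := Finset.ne_of_mem_erase (Finset.mem_of_mem_erase hx)
    have hxC : x ∈ C := Finset.mem_of_mem_erase (Finset.mem_of_mem_erase hx)
    exact ⟨hxC, lt_of_le_of_ne (C.min'_le x hxC) (Ne.symm hx2),
      lt_of_le_of_ne (C.le_max' x hxC) hx1⟩
  -- tag each middle position
  have hmaps : ∀ x ∈ D, (ch f x ye, ch f y0 x) ∈ AJ ×ˢ AJ := by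
    intro x hx
    obtain ⟨hxC, h1, h2⟩ := hDmem x hx
    rw [Finset.mem_product]
    exact ⟨(hcol x hxC ye hyeC h2).1, (hcol y0 hy0C x hxC h1).1⟩
  have hcard2 : (AJ ×ˢ AJ).card * 2 < D.card := by
    rw [Finset.card_product]
    have : AJ.card * AJ.card = AJ.card ^ 2 := by ring
    omega
  obtain ⟨τ, hτ, hfib⟩ :=
    Finset.exists_lt_card_fiber_of_mul_lt_card_of_maps_to hmaps hcard2
  set F := D.filter (fun x => (ch f x ye, ch f y0 x) = τ) with hF
  -- extract three elements zb < zc < zd of F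
  have hFne : F.Nonempty := Finset.card_pos.mp (by omega)
  set zb := F.min' hFne with hzb
  have hzbF : zb ∈ F := F.min'_mem hFne
  set F1 := F.erase zb with hF1
  have hF1card : 2 ≤ F1.card := by
    have h := Finset.pred_card_le_card_erase (a := zb) (s := F)
    rw [← hF1] at h
    omega
  have hF1ne : F1.Nonempty := Finset.card_pos.mp (by omega)
  set zc := F1.min' hF1ne with hzc
  have hzcF1 : zc ∈ F1 := F1.min'_mem hF1ne
  have hzcF : zc ∈ F := Finset.mem_of_mem_erase hzcF1
  set F2 := F1.erase zc with hF2
  have hF2card : 1 ≤ F2.card := by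
    have h := Finset.pred_card_le_card_erase (a := zc) (s := F1)
    rw [← hF2] at h
    omega
  have hF2ne : F2.Nonempty := Finset.card_pos.mp (by omega)
  set zd := F2.min' hF2ne with hzd
  have hzdF1 : zd ∈ F1 := Finset.mem_of_mem_erase (F2.min'_mem hF2ne)
  have hzdF : zd ∈ F := Finset.mem_of_mem_erase hzdF1
  have hbc : zb < zc :=
    lt_of_le_of_ne (F.min'_le zc hzcF) (Ne.symm (Finset.ne_of_mem_erase hzcF1))
  have hcd : zc < zd :=
    lt_of_le_of_ne (F1.min'_le zd hzdF1) (Ne.symm (Finset.ne_of_mem_erase (F2.min'_mem hF2ne)))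
  -- memberships and tags
  have hzbD : zb ∈ D := Finset.mem_of_mem_filter zb hzbF
  have hzcD : zc ∈ D := Finset.mem_of_mem_filter zc hzcF
  have hzdD : zd ∈ D := Finset.mem_of_mem_filter zd hzdF
  obtain ⟨hzbC, hy0b, hbye⟩ := hDmem zb hzbD
  obtain ⟨hzcC, hy0c, hcye⟩ := hDmem zc hzcD
  obtain ⟨hzdC, hy0d, hdye⟩ := hDmem zd hzdD
  have htagb := (Finset.mem_filter.mp hzbF).2
  have htagc := (Finset.mem_filter.mp hzcF).2
  have htagd := (Finset.mem_filter.mp hzdF).2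
  have hβbc : ch f zb ye = ch f zc ye := by
    rw [show ch f zb ye = τ.1 from congrArg Prod.fst htagb,
        show ch f zc ye = τ.1 from congrArg Prod.fst htagc]
  have hβcd : ch f zc ye = ch f zd ye := by
    rw [show ch f zc ye = τ.1 from congrArg Prod.fst htagc,
        show ch f zd ye = τ.1 from congrArg Prod.fst htagd]
  have hαbc : ch f y0 zb = ch f y0 zc := by
    rw [show ch f y0 zb = τ.2 from congrArg Prod.snd htagb,
        show ch f y0 zc = τ.2 from congrArg Prod.snd htagc]
  have hαcd : ch f y0 zc = ch f y0 zd := by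
    rw [show ch f y0 zc = τ.2 from congrArg Prod.snd htagc,
        show ch f y0 zd = τ.2 from congrArg Prod.snd htagd]
  -- key identities
  have hid1 : ch f y0 zb * ch f zb zc = ch f y0 zb := by
    rw [ch_mul f hy0b hbc, ← hαbc]
  have hid2 : ch f y0 zb * ch f zc zd = ch f y0 zb := by
    rw [hαbc, ch_mul f hy0c hcd, ← hαcd]
  have hid3 : ch f zb zc * ch f zc ye = ch f zc ye := by
    rw [ch_mul f hbc hcye]
    exact hβbc
  have hid4 : ch f zc zd * ch f zc ye = ch f zc ye := by
    rw [hβcd, ch_mul f hcd hdye]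
    exact hβcd
  -- J-equivalences
  have hju : jequiv (ch f zb zc) c := (hcol zb hzbC zc hzcC hbc).2
  have hjv : jequiv (ch f zc zd) c := (hcol zc hzcC zd hzdC hcd).2
  have hjα : jequiv (ch f y0 zb) c := (hcol y0 hy0C zb hzbC hy0b).2
  have hjβ : jequiv (ch f zc ye) c := (hcol zc hzcC ye hyeC hcye).2
  -- stability
  obtain ⟨w, hw⟩ : ∃ w, w * (ch f y0 zb * ch f zb zc) = ch f zb zc := by
    apply lstab
    rw [hid1]
    exact jle_trans hju.1 hjα.2
  rw [hid1] at hw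
  obtain ⟨w', hw'⟩ : ∃ w', ch f zc zd * ch f zc ye * w' = ch f zc zd := by
    apply rstab
    rw [hid4]
    exact jle_trans hjv.1 hjβ.2
  rw [hid4] at hw'
  have huv1 : ch f zb zc * ch f zc zd = ch f zb zc := by
    rw [← hw, mul_assoc, hid2, hw]
  have huv2 : ch f zb zc * ch f zc zd = ch f zc zd := by
    rw [← hw', ← mul_assoc, hid3]
  have huveq : ch f zb zc = ch f zc zd := by rw [← huv1, huv2]
  -- build the triple
  apply hfree
  refine ⟨zb, zc, zd, hzbC, hzcC, hzdC, hbc, hcd, ?_, ?_⟩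
  · exact WithOne.coe_inj.mp huveq
  · have h2 : ch f zb zc * ch f zb zc = ch f zb zc := by
      nth_rewrite 2 [huveq]
      exact huv1
    exact WithOne.coe_inj.mp ((WithOne.coe_mul _ _).trans h2)



lemma numeric_bound (m : ℕ) (hm : 1 ≤ m) : 2 * m ^ 2 + 2 ≤ 8 ^ m := by
  induction m, hm using Nat.le_induction with
  | base => norm_num
  | succ m hm ih =>
      have h8 : 8 ^ (m + 1) = 8 * 8 ^ m := by ring
      nlinarith

lemma main_lemma (f : ℕ → S) :
    ∀ (A : Finset (WithOne S)) (s : Finset ℕ),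
      (∀ i ∈ s, ∀ j ∈ s, i < j → ch f i j ∈ A) → Tfree f s →
      s.card ≤ 8 ^ A.card := by
  classical
  intro A
  induction A using Finset.strongInduction with
  | _ A IH =>
    intro s hcol hfree
    by_cases hs2 : s.card ≤ 1
    · exact le_trans hs2 (Nat.one_le_pow _ _ (by norm_num))
    push_neg at hs2
    have hsne : s.Nonempty := Finset.card_pos.mp (by omega)
    set mn := s.min' hsne with hmn
    set mx := s.max' hsne with hmx
    have hmnmx : mn < mx := Finset.min'_lt_max'_of_card s hs2
    have hmns : mn ∈ s := s.min'_mem hsne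
    have hmxs : mx ∈ s := s.max'_mem hsne
    set c := ch f mn mx with hc
    have hcA : c ∈ A := hcol mn hmns mx hmxs hmnmx
    -- every color is J-above c
    have hlow : ∀ u ∈ s, ∀ v ∈ s, u < v → jle c (ch f u v) := by
      intro u hu v hv huv
      have hmnu : mn ≤ u := s.min'_le u hu
      have hvmx : v ≤ mx := s.le_max' v hv
      rcases eq_or_lt_of_le hmnu with h1 | h1 <;> rcases eq_or_lt_of_le hvmx with h2 | h2
      · exact ⟨1, 1, by rw [one_mul, mul_one, hc, h1, h2]⟩
      · refine ⟨1, ch f v mx, ?_⟩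
        rw [one_mul, hc, h1]
        exact (ch_mul f (h1 ▸ huv) h2).symm
      · refine ⟨ch f mn u, 1, ?_⟩
        rw [mul_one, hc, h2]
        exact (ch_mul f h1 (h2 ▸ huv)).symm
      · refine ⟨ch f mn u, ch f v mx, ?_⟩
        rw [hc, ← ch_mul f (h1.trans huv) h2, ← ch_mul f h1 huv]
    set AJ := A.filter (fun a => jequiv a c) with hAJ
    set A' := A.filter (fun a => ¬ jequiv a c) with hA'
    have hA'sub : A' ⊂ A := by
      rw [hA']
      exact Finset.filter_ssubset.mpr ⟨c, hcA, not_not_intro (jequiv_refl c)⟩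
    have hcards : AJ.card + A'.card = A.card :=
      Finset.card_filter_add_card_filter_not _
    have hAJpos : 1 ≤ AJ.card :=
      Finset.card_pos.mpr ⟨c, Finset.mem_filter.mpr ⟨hcA, jequiv_refl c⟩⟩
    -- the cut machinery
    set T := mx + 1 with hT
    set nextf : ℕ → ℕ := fun p =>
      if h : (s.filter fun q => p < q ∧ jequiv (ch f p q) c).Nonempty
      then (s.filter fun q => p < q ∧ jequiv (ch f p q) c).min' h else T with hnextf
    have hnext_mem : ∀ p,
        (nextf p ∈ s ∧ p < nextf p ∧ jequiv (ch f p (nextf p)) c) ∨ nextf p = T := by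
      intro p
      simp only [hnextf]
      split_ifs with h
      · left
        have hm := (s.filter fun q => p < q ∧ jequiv (ch f p q) c).min'_mem h
        rw [Finset.mem_filter] at hm
        exact ⟨hm.1, hm.2.1, hm.2.2⟩
      · right; rfl
    have hnext_min : ∀ p q, q ∈ s → p < q → jequiv (ch f p q) c → nextf p ≤ q := by
      intro p q hq hpq hj
      have hne : (s.filter fun r => p < r ∧ jequiv (ch f p r) c).Nonempty :=
        ⟨q, Finset.mem_filter.mpr ⟨hq, hpq, hj⟩⟩
      simp only [hnextf]
      rw [dif_pos hne]
      exact Finset.min'_le _ q (Finset.mem_filter.mpr ⟨hq, hpq, hj⟩)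
    set cut : ℕ → ℕ := fun r => nextf^[r] mn with hcut
    have hcut0 : cut 0 = mn := rfl
    have hcutS : ∀ r, cut (r + 1) = nextf (cut r) := by
      intro r; simp only [hcut, Function.iterate_succ_apply']
    have hsleT : ∀ q ∈ s, q < T := by
      intro q hq; have := s.le_max' q hq; omega
    have hTfix : nextf T = T := by
      rcases hnext_mem T with ⟨h1, h2, _⟩ | h
      · have := hsleT _ h1; omega
      · exact h
    have hcut_mem : ∀ r, cut r ∈ s ∨ cut r = T := by
      intro r; induction r with
      | zero => left; rw [hcut0]; exact hmns
      | succ r ih =>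
          rw [hcutS]
          rcases hnext_mem (cut r) with h | h
          · left; exact h.1
          · right; exact h
    have hcutT : ∀ r, cut r = T → cut (r + 1) = T := by
      intro r h; rw [hcutS, h, hTfix]
    have hmono : ∀ r, cut r ∈ s → cut r < cut (r + 1) := by
      intro r h
      rw [hcutS]
      rcases hnext_mem (cut r) with h' | h'
      · exact h'.2.1
      · rw [h']; exact hsleT _ h
    have hlb : ∀ r, cut r = T ∨ mn + r ≤ cut r := by
      intro r; induction r with
      | zero => right; omega
      | succ r ih =>
          rcases hcut_mem (r + 1) with h | h
          · right
            rcases ih with h' | h'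
            · rw [hcutT r h'] at h
              have := hsleT _ h; omega
            · rcases hcut_mem r with h'' | h''
              · have := hmono r h''; omega
              · rw [hcutT r h''] at h
                have := hsleT _ h; omega
          · left; exact h
    have hexT : ∃ r, cut r = T := by
      rcases hlb T with h | h
      · exact ⟨T, h⟩
      · rcases hcut_mem T with h' | h'
        · have := hsleT _ h'; omega
        · exact ⟨T, h'⟩
    set R := Nat.find hexT with hR
    have hRT : cut R = T := Nat.find_spec hexT
    have hcutsR : ∀ r, r < R → cut r ∈ s := by
      intro r hr
      rcases hcut_mem r with h | h
      · exact h
      · exact absurd h (Nat.find_min hexT hr)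
    have hRpos : 0 < R := by
      rcases Nat.eq_zero_or_pos R with h | h
      · rw [h, hcut0] at hRT
        have := hsleT mn hmns; omega
      · exact h
    have hcutmono : ∀ r r', r < r' → r' ≤ R → cut r < cut r' := by
      intro r r' hrr' hr'R
      induction r' with
      | zero => omega
      | succ r' ih =>
          have h1 : cut r' < cut (r' + 1) := hmono r' (hcutsR r' (by omega))
          rcases Nat.lt_or_ge r r' with h | h
          · exact lt_trans (ih h (by omega)) h1
          · have he : r = r' := by omega
            rw [he]; exact h1
    -- blocks
    set blockOf : ℕ → ℕ := fun q => Nat.findGreatest (fun r => cut r ≤ q) R with hblockOf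
    have hblock : ∀ q ∈ s, blockOf q < R ∧ cut (blockOf q) ≤ q ∧ q < cut (blockOf q + 1) := by
      intro q hq
      have hP0 : cut 0 ≤ q := by rw [hcut0]; exact s.min'_le q hq
      have hspec : cut (blockOf q) ≤ q := by
        simp only [hblockOf]
        exact Nat.findGreatest_spec (P := fun r => cut r ≤ q) (Nat.zero_le R) hP0
      have hle : blockOf q ≤ R := Nat.findGreatest_le R
      have hne : blockOf q ≠ R := by
        intro h
        rw [h, hRT] at hspec
        have := hsleT q hq; omega
      have hgr := Nat.findGreatest_is_greatest (P := fun r => cut r ≤ q) (n := R)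
        (k := blockOf q + 1) (by simp only [hblockOf]; omega) (by omega)
      exact ⟨by omega, hspec, by omega⟩
    have hmapsb : ∀ q ∈ s, blockOf q ∈ Finset.range R := by
      intro q hq; rw [Finset.mem_range]; exact (hblock q hq).1
    have hsum : s.card = ∑ r ∈ Finset.range R, (s.filter fun q => blockOf q = r).card :=
      Finset.card_eq_sum_card_fiberwise hmapsb
    have hfiber : ∀ r ∈ Finset.range R,
        (s.filter fun q => blockOf q = r).card ≤ 8 ^ A'.card := by
      intro r hr
      rw [Finset.mem_range] at hr
      refine IH A' hA'sub _ ?_ (hfree.mono (Finset.filter_subset _ s))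
      intro u hu v hv huv
      rw [Finset.mem_filter] at hu hv
      obtain ⟨hus, hubl⟩ := hu
      obtain ⟨hvs, hvbl⟩ := hv
      have hub := hblock u hus
      have hvb := hblock v hvs
      rw [hubl] at hub
      rw [hvbl] at hvb
      rw [hA', Finset.mem_filter]
      refine ⟨hcol u hus v hvs huv, ?_⟩
      intro hj
      have hcr : cut r ∈ s := hcutsR r hr
      have hjv : jequiv (ch f (cut r) v) c := by
        rcases eq_or_lt_of_le hub.2.1 with h | h
        · rw [h]; exact hj
        · constructor
          · refine jle_trans ⟨ch f (cut r) u, 1, ?_⟩ hj.1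
            rw [mul_one]
            exact (ch_mul f h huv).symm
          · exact hlow (cut r) hcr v hvs (lt_of_le_of_lt hub.2.1 huv)
      have hnm := hnext_min (cut r) v hvs (lt_of_le_of_lt hub.2.1 huv) hjv
      rw [← hcutS r] at hnm
      have := hvb.2.2
      omega
    -- the chain of cut points is smooth
    set C := (Finset.range R).image cut with hCdef
    have hCcard : C.card = R := by
      rw [hCdef, Finset.card_image_of_injOn, Finset.card_range]
      intro a ha b hb hab
      rw [Finset.mem_coe, Finset.mem_range] at ha hb
      by_contra hne
      rcases Nat.lt_or_ge a b with h | h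
      · have := hcutmono a b h (by omega); omega
      · have hba : b < a := by omega
        have := hcutmono b a hba (by omega); omega
    have hCsub : C ⊆ s := by
      intro x hx
      rw [hCdef, Finset.mem_image] at hx
      obtain ⟨r, hr, hrx⟩ := hx
      rw [← hrx]
      exact hcutsR r (Finset.mem_range.mp hr)
    have hstep : ∀ r, r + 1 < R → jequiv (ch f (cut r) (cut (r + 1))) c := by
      intro r hr
      rcases hnext_mem (cut r) with hm | hm
      · have := hm.2.2
        rw [← hcutS r] at this
        exact this
      · rw [← hcutS r] at hm
        have := hsleT _ (hcutsR (r + 1) hr)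
        omega
    have hsmoothcol : ∀ u ∈ C, ∀ v ∈ C, u < v → ch f u v ∈ AJ ∧ jequiv (ch f u v) c := by
      intro u hu v hv huv
      rw [hCdef, Finset.mem_image] at hu hv
      obtain ⟨r, hr, hru⟩ := hu
      obtain ⟨r', hr', hrv⟩ := hv
      rw [Finset.mem_range] at hr hr'
      subst hru hrv
      have hrr' : r < r' := by
        by_contra h
        push_neg at h
        rcases eq_or_lt_of_le h with h1 | h1
        · rw [h1] at huv; omega
        · have := hcutmono r' r h1 (by omega); omega
      have hjequiv : jequiv (ch f (cut r) (cut r')) c := by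
        rcases Nat.eq_or_lt_of_le (Nat.succ_le_of_lt hrr') with h | h
        · rw [← h]
          exact hstep r (by omega)
        · constructor
          · refine jle_trans ⟨1, ch f (cut (r + 1)) (cut r'), ?_⟩ (hstep r (by omega)).1
            rw [one_mul]
            exact (ch_mul f (hcutmono r (r + 1) (by omega) (by omega))
              (hcutmono (r + 1) r' h (by omega))).symm
          · exact hlow (cut r) (hcutsR r (by omega)) (cut r') (hcutsR r' hr')
              (hcutmono r r' hrr' (by omega))
      exact ⟨Finset.mem_filter.mpr
        ⟨hcol (cut r) (hcutsR r hr) (cut r') (hcutsR r' hr')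
          (hcutmono r r' hrr' (by omega)), hjequiv⟩, hjequiv⟩
    have hsmooth := smooth f AJ c C hsmoothcol (hfree.mono hCsub)
    rw [hCcard] at hsmooth
    have hR8 : R ≤ 8 ^ AJ.card := le_trans hsmooth (numeric_bound AJ.card hAJpos)
    calc s.card = ∑ r ∈ Finset.range R, (s.filter fun q => blockOf q = r).card := hsum
      _ ≤ (Finset.range R).card • 8 ^ A'.card :=
          Finset.sum_le_card_nsmul _ _ _ hfiber
      _ = R * 8 ^ A'.card := by rw [Finset.card_range, smul_eq_mul]
      _ ≤ 8 ^ AJ.card * 8 ^ A'.card := Nat.mul_le_mul_right _ hR8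
      _ = 8 ^ A.card := by rw [← pow_add, hcards]

end Smooth

/-- Ramsey/Simon-type statement: for a finite semigroup `S` with `|S| ≤ E` and a
sequence `f : {1,...,n} → S` with `n > 2^{3E}`, there exist indices
`i < j < k ≤ n` such that the products over `[i,j]`, `[j,k]` and `[i,k]` are
all equal to the same idempotent element of `S`. -/
theorem simon_consecutive_idempotents {S : Type*} [Semigroup S] [Fintype S]
    (E n : ℕ) (hcard : Fintype.card S ≤ E) (hn : 2 ^ (3 * E) < n) (f : ℕ → S) :
    ∃ i j k : ℕ, i < j ∧ j < k ∧ k ≤ n ∧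
      iprod f i j = iprod f j k ∧ iprod f i k = iprod f i j ∧
      IsIdempotentElem (iprod f i j) := by
  classical
  by_contra hcon
  have hfree : Tfree f (Finset.range (n + 1)) := by
    rintro ⟨i, j, k, hi, hj, hk, hij, hjk, heq, hidem⟩
    apply hcon
    refine ⟨i, j, k, hij, hjk, by rw [Finset.mem_range] at hk; omega, heq, ?_, hidem⟩
    rw [← iprod_mul f hij hjk, ← heq]
    exact hidem
  set A : Finset (WithOne S) := Finset.univ.image (fun a : S => WithOne.coe a) with hA
  have hcol : ∀ i ∈ Finset.range (n + 1), ∀ j ∈ Finset.range (n + 1),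
      i < j → ch f i j ∈ A := by
    intro i _ j _ _
    rw [hA, Finset.mem_image]
    exact ⟨iprod f i j, Finset.mem_univ _, rfl⟩
  have hmain := main_lemma f A (Finset.range (n + 1)) hcol hfree
  rw [Finset.card_range] at hmain
  have hAcard : A.card ≤ E := by
    calc A.card ≤ Finset.univ.card := Finset.card_image_le
      _ = Fintype.card S := rfl
      _ ≤ E := hcard
  have h8 : (8 : ℕ) ^ A.card ≤ 8 ^ E := Nat.pow_le_pow_right (by norm_num) hAcard
  have hE : (2 : ℕ) ^ (3 * E) = 8 ^ E := by
    rw [pow_mul]; norm_num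
  omega
end

section
/- Any successful run of a functional two-way transducer that visits two locations at the same input position, with the same state, and with levels of equal parity, produces empty output between these two locations; consequently every input in the domain admits a successful run whose crossing sequences have length at most 2|Q| - 1. -/
/-- A nondeterministic two-way word transducer: from a state, reading an input
letter, it may output a word, change state, and move right (`true`) or left
(`false`). -/
structure TWT (α β Q : Type) where
  δ : Q → α → Set (List β × Q × Bool)
  init : Set Q
  final : Set Q

/-- A run of a two-way transducer on input `u`: a sequence of `len + 1`
configurations (state and head position), each consecutive pair related by a
transition reading the letter under the head, emitting an output word and
moving the head one step right or left (never moving left from position 0). -/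
structure TWTRun {α β Q : Type} (T : TWT α β Q) (u : List α) where
  len : ℕ
  st : ℕ → Q
  pos : ℕ → ℕ
  out : ℕ → List β
  step : ∀ i < len, ∃ a d, u[pos i]? = some a ∧
    (out i, st (i + 1), d) ∈ T.δ (st i) a ∧
    pos (i + 1) = (if d then pos i + 1 else pos i - 1) ∧
    (d = false → 0 < pos i)

/-- A run is successful if it starts in an initial state at the leftmost
position and ends in a final state just past the right end of the input. -/
def TWTRun.Successful {α β Q : Type} {T : TWT α β Q} {u : List α}
    (ρ : TWTRun T u) : Prop :=
  ρ.st 0 ∈ T.init ∧ ρ.pos 0 = 0 ∧ ρ.st ρ.len ∈ T.final ∧ ρ.pos ρ.len = u.length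

/-- The output produced by a run. -/
def TWTRun.output {α β Q : Type} {T : TWT α β Q} {u : List α}
    (ρ : TWTRun T u) : List β :=
  ((List.range ρ.len).map ρ.out).flatten

/-- A two-way transducer is functional if all successful runs on a given
input produce the same output. -/
def TWT.Functional {α β Q : Type} (T : TWT α β Q) : Prop :=
  ∀ (u : List α) (ρ₁ ρ₂ : TWTRun T u),
    ρ₁.Successful → ρ₂.Successful → ρ₁.output = ρ₂.output

/-!
In this model a configuration is a state together with a head position, so a run that is in
the same configuration at times `i < j` can be spliced: jumping from `j` back to `i` repeats the
factor between them, jumping from `i` forward to `j` deletes it. Repeating it produces another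
successful run whose output contains the factor's output once more, so by functionality that
output is empty. Deleting factors shortens the run, so iterating gives a successful run that
never visits a position twice in the same state; its crossing sequences have length at most
`|Q| ≤ 2|Q| - 1`.
-/

def spliceIndex (i j k : ℕ) : ℕ := if k < i then k else k - i + j

section spliceIndex

variable {γ : Type} {f : ℕ → γ} {i j : ℕ}

theorem apply_spliceIndex_zero (h : f i = f j) : f (spliceIndex i j 0) = f 0 := by
  unfold spliceIndex
  split_ifs with hi
  · rfl
  · rw [show 0 - i + j = j by omega, ← h, Nat.eq_zero_of_not_pos hi]

theorem apply_spliceIndex_succ (h : f i = f j) (k : ℕ) :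
    f (spliceIndex i j (k + 1)) = f (spliceIndex i j k + 1) := by
  unfold spliceIndex
  split_ifs with h₁ h₂ h₂
  · rfl
  · omega
  · rw [show k + 1 - i + j = j by omega, ← h, show k + 1 = i by omega]
  · congr 1
    omega

theorem map_spliceIndex_range' (i j n : ℕ) :
    (List.range' i n).map (spliceIndex i j) = List.range' j n := by
  rw [List.range'_eq_map_range, List.range'_eq_map_range, List.map_map]
  refine List.map_congr_left fun k _ => ?_
  simp [spliceIndex, Nat.add_comm]

end spliceIndex

namespace TWTRun

variable {α β Q : Type} {T : TWT α β Q} {u : List α}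

def outputBetween (ρ : TWTRun T u) (a b : ℕ) : List β :=
  ((List.range' a (b - a)).map ρ.out).flatten

theorem outputBetween_append (ρ : TWTRun T u) {a b c : ℕ} (hab : a ≤ b) (hbc : b ≤ c) :
    ρ.outputBetween a b ++ ρ.outputBetween b c = ρ.outputBetween a c := by
  obtain ⟨m, rfl⟩ := Nat.exists_eq_add_of_le hab
  obtain ⟨n, rfl⟩ := Nat.exists_eq_add_of_le hbc
  simp only [outputBetween, Nat.add_sub_cancel_left, Nat.add_sub_add_left, Nat.add_assoc,
    ← List.flatten_append, ← List.map_append, List.range'_append_1]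

theorem output_eq_outputBetween (ρ : TWTRun T u) : ρ.output = ρ.outputBetween 0 ρ.len := by
  simp [output, outputBetween, List.range_eq_range']

def splice (ρ : TWTRun T u) (i j : ℕ) (hi : i ≤ ρ.len) (hj : j ≤ ρ.len)
    (hst : ρ.st i = ρ.st j) (hpos : ρ.pos i = ρ.pos j) : TWTRun T u where
  len := i + (ρ.len - j)
  st k := ρ.st (spliceIndex i j k)
  pos k := ρ.pos (spliceIndex i j k)
  out k := ρ.out (spliceIndex i j k)
  step k hk := by
    rw [apply_spliceIndex_succ hst, apply_spliceIndex_succ hpos]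
    exact ρ.step _ (by unfold spliceIndex; split_ifs <;> omega)

section splice

variable {ρ : TWTRun T u} {i j : ℕ} {hi : i ≤ ρ.len} {hj : j ≤ ρ.len}
  {hst : ρ.st i = ρ.st j} {hpos : ρ.pos i = ρ.pos j}

theorem Successful.splice (hρ : ρ.Successful) : (ρ.splice i j hi hj hst hpos).Successful := by
  have hend : spliceIndex i j (i + (ρ.len - j)) = ρ.len := by
    unfold spliceIndex; split_ifs <;> omega
  obtain ⟨hinit, hstart, hfinal, hstop⟩ := hρ
  refine ⟨?_, ?_, ?_, ?_⟩ <;> simp only [TWTRun.splice]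
  · rwa [apply_spliceIndex_zero hst]
  · rwa [apply_spliceIndex_zero hpos]
  · rwa [hend]
  · rwa [hend]

theorem output_splice :
    (ρ.splice i j hi hj hst hpos).output = ρ.outputBetween 0 i ++ ρ.outputBetween j ρ.len := by
  have hprefix : (List.range' 0 i).map (spliceIndex i j) = List.range' 0 i := by
    conv_rhs => rw [← List.map_id (List.range' 0 i)]
    exact List.map_congr_left fun k hk => if_pos (by simpa using List.mem_range'_1.mp hk)
  have hcomp : (fun k => ρ.out (spliceIndex i j k)) = ρ.out ∘ spliceIndex i j := rfl
  simp only [output, TWTRun.splice, outputBetween, List.range_eq_range', Nat.sub_zero,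
    ← List.range'_append_1 (s := 0) (m := i), Nat.zero_add, List.map_append, List.flatten_append]
  rw [hcomp, ← List.map_map, ← List.map_map, hprefix, map_spliceIndex_range']

end splice

theorem outputBetween_eq_nil_of_loop (hfun : T.Functional) {ρ : TWTRun T u} (hρ : ρ.Successful)
    {i j : ℕ} (hij : i ≤ j) (hj : j ≤ ρ.len) (hst : ρ.st i = ρ.st j)
    (hpos : ρ.pos i = ρ.pos j) : ρ.outputBetween i j = [] := by
  have hpump := hfun u _ ρ (hρ.splice (hi := hj) (hj := hij.trans hj) (hst := hst.symm)
    (hpos := hpos.symm)) hρ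
  rw [output_splice, output_eq_outputBetween, ← outputBetween_append ρ (Nat.zero_le i) hij,
    ← outputBetween_append ρ hij hj, ← outputBetween_append ρ (Nat.zero_le i) (hij.trans hj),
    ← outputBetween_append ρ hij hj] at hpump
  have := congrArg List.length hpump
  simp only [List.length_append] at this
  exact List.length_eq_zero_iff.mp (by omega)

def LoopFree (ρ : TWTRun T u) : Prop :=
  ∀ i j, i < j → j ≤ ρ.len → ρ.pos i = ρ.pos j → ρ.st i ≠ ρ.st j

theorem exists_successful_loopFree {ρ : TWTRun T u} (hρ : ρ.Successful) :
    ∃ ρ' : TWTRun T u, ρ'.Successful ∧ ρ'.LoopFree := by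
  induction h : ρ.len using Nat.strong_induction_on generalizing ρ with
  | _ n ih =>
    by_cases hfree : ρ.LoopFree
    · exact ⟨ρ, hρ, hfree⟩
    · simp only [LoopFree, not_forall, not_not] at hfree
      obtain ⟨i, j, hij, hj, hpos, hst⟩ := hfree
      exact ih _ (by simp only [TWTRun.splice]; omega)
        (hρ.splice (hi := hij.le.trans hj) (hj := hj) (hst := hst) (hpos := hpos)) rfl

def visits (ρ : TWTRun T u) (x : ℕ) : List ℕ :=
  (List.range (ρ.len + 1)).filter fun i => ρ.pos i == x

theorem LoopFree.length_visits_le [Fintype Q] {ρ : TWTRun T u} (hρ : ρ.LoopFree) (x : ℕ) :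
    (ρ.visits x).length ≤ Fintype.card Q := by
  have hinj : ∀ a ∈ ρ.visits x, ∀ b ∈ ρ.visits x, ρ.st a = ρ.st b → a = b := by
    intro a ha b hb hst
    simp only [visits, List.mem_filter, List.mem_range, beq_iff_eq] at ha hb
    by_contra hne
    rcases Nat.lt_or_gt_of_ne hne with hab | hba
    · exact hρ a b hab (by omega) (ha.2.trans hb.2.symm) hst
    · exact hρ b a hba (by omega) (hb.2.trans ha.2.symm) hst.symm
  simpa using ((List.nodup_range.filter _).map_on hinj).length_le_card

end TWTRun

/-- For a functional two-way transducer: (1) any successful run visiting two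
locations at the same position, with the same state and levels of equal parity
(i.e., both entered moving in the same direction) produces empty output between
these two locations; and (2) consequently, every input in the domain admits a
successful run whose crossing sequences have length at most `2|Q| - 1`, i.e.,
every position is visited at most `2|Q| - 1` times. -/
theorem functional_normalized_runs {α β Q : Type} [Fintype Q]
    (T : TWT α β Q) (hfun : T.Functional) :
    (∀ (u : List α) (ρ : TWTRun T u), ρ.Successful →
      ∀ i j : ℕ, 1 ≤ i → i < j → j ≤ ρ.len →
        ρ.st i = ρ.st j → ρ.pos i = ρ.pos j →
        (ρ.pos i = ρ.pos (i - 1) + 1 ↔ ρ.pos j = ρ.pos (j - 1) + 1) →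
        ((List.range' i (j - i)).map ρ.out).flatten = []) ∧
    (∀ u : List α, (∃ ρ : TWTRun T u, ρ.Successful) →
      ∃ ρ : TWTRun T u, ρ.Successful ∧
        ∀ x : ℕ,
          (((List.range (ρ.len + 1)).filter fun i => ρ.pos i == x).length)
            ≤ 2 * Fintype.card Q - 1) := by
  refine ⟨fun u ρ hρ i j _ hij hj hst hpos _ =>
    TWTRun.outputBetween_eq_nil_of_loop hfun hρ hij.le hj hst hpos, ?_⟩
  rintro u ⟨ρ, hρ⟩
  obtain ⟨ρ', hρ', hfree⟩ := TWTRun.exists_successful_loopFree hρ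
  have hQ : 0 < Fintype.card Q := Fintype.card_pos_iff.mpr ⟨ρ.st 0⟩
  exact ⟨ρ', hρ', fun x => (hfree.length_visits_le x).trans (by omega)⟩
end
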